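/- Let n ≥ 1 and let φ ∈ L^∞((0,∞)). Define, for x, y ∈ ℝ^n with x ≠ y, H^φ(x,y) = ∫_0^∞ φ(t) · ∂/∂t ( e^{-|x-y|^2/(4t)} / (4πt)^{n/2} ) dt. Then the integral converges absolutely and there exists a constant C > 0 (depending only on n and the L^∞ norm of φ) such that |H^φ(x,y)| ≤ C / |x-y|^n for all x ≠ y. -/

import Mathlib

/-!
Write `k(t) = e^{-r²/(4t)} (4πt)^{-n/2}` with `r = |x - y| > 0`. Then
`∂ₜk = k · (r²/(4t²) - n/(2t))`, so `|∂ₜk| ≤ k · (r²/(4t²) + n/(2t))`. Each of the two terms is a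
multiple of `e^{-a/t} t^{-(q+1)}` with `a = r²/4`, and the substitution `t = 1/u` turns its integral
into the Gamma integral `Γ(q) a^{-q}`. Since `(n/2) Γ(n/2) = Γ(n/2 + 1)`, both terms contribute the
same amount and `∫₀^∞ |∂ₜk| dt ≤ 2 Γ(n/2 + 1) π^{-n/2} r^{-n}`. Pairing with `φ ∈ L^∞` costs a
factor `‖φ‖_∞`.
-/

open Real MeasureTheory Set

/-- The substitution `t = u⁻¹`, written in the form of `integral_comp_rpow_Ioi` with `p = -1`. -/
theorem exp_neg_div_mul_rpow_eq_comp_inv {a q x : ℝ} (hx : 0 < x) :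
    exp (-a / x) * x ^ (-(q + 1)) =
      (|(-1 : ℝ)| * x ^ ((-1 : ℝ) - 1)) •
        ((x ^ (-1 : ℝ)) ^ (q - 1) * exp (-(a * x ^ (-1 : ℝ)))) := by
  rw [rpow_neg_one, inv_rpow hx.le, ← rpow_neg hx.le, smul_eq_mul, abs_neg, abs_one, one_mul,
    ← mul_assoc, ← rpow_add hx, div_eq_mul_inv]
  ring_nf

theorem integrableOn_exp_neg_div_mul_rpow {a q : ℝ} (ha : 0 < a) (hq : 0 < q) :
    IntegrableOn (fun t => exp (-a / t) * t ^ (-(q + 1))) (Ioi 0) := by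
  have h := (integrableOn_Ioi_comp_rpow_iff (fun y => y ^ (q - 1) * exp (-(a * y)))
    (p := -1) (by norm_num)).2 <|
    (integrableOn_rpow_mul_exp_neg_mul_rpow (s := q - 1) (by linarith) one_pos ha).congr_fun
      (fun y _ => by simp only [rpow_one, neg_mul]) measurableSet_Ioi
  exact h.congr_fun (fun x hx => (exp_neg_div_mul_rpow_eq_comp_inv hx).symm) measurableSet_Ioi

theorem integral_exp_neg_div_mul_rpow {a q : ℝ} (ha : 0 < a) (hq : 0 < q) :
    ∫ t in Ioi 0, exp (-a / t) * t ^ (-(q + 1)) = Gamma q * a ^ (-q) := by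
  rw [setIntegral_congr_fun measurableSet_Ioi (fun x hx => exp_neg_div_mul_rpow_eq_comp_inv hx),
    integral_comp_rpow_Ioi (fun y => y ^ (q - 1) * exp (-(a * y))) (by norm_num),
    integral_rpow_mul_exp_neg_mul_Ioi hq ha, one_div, inv_rpow ha.le, rpow_neg ha.le, mul_comm]

theorem norm_integral_mul_le_lpNorm_top_mul {α 𝕜 : Type*} [MeasurableSpace α] {μ : Measure α}
    [RCLike 𝕜] {φ g : α → 𝕜} (hφ : MemLp φ ⊤ μ) (hg : Integrable g μ) :
    ‖∫ x, φ x * g x ∂μ‖ ≤ lpNorm φ ⊤ μ * ∫ x, ‖g x‖ ∂μ := by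
  refine (norm_integral_le_of_norm_le (hg.norm.const_mul _) ?_).trans_eq (integral_const_mul _ _)
  filter_upwards [ae_le_lpNorm_exponent_top hφ] with x hx
  rw [norm_mul]
  exact mul_le_mul_of_nonneg_right hx (norm_nonneg _)

noncomputable def heatKernel (n : ℕ) (r t : ℝ) : ℝ :=
  exp (-r ^ 2 / (4 * t)) / (4 * π * t) ^ ((n : ℝ) / 2)

section HeatKernel

variable {n : ℕ} {r t : ℝ}

theorem heatKernel_eq_of_pos (ht : 0 < t) :
    heatKernel n r t =
      (4 * π) ^ (-((n : ℝ) / 2)) * (exp (-(r ^ 2 / 4) / t) * t ^ (-((n : ℝ) / 2))) := by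
  rw [heatKernel, mul_rpow (by positivity) ht.le, rpow_neg (by positivity), rpow_neg ht.le,
    neg_div, neg_div, div_div]
  field_simp

theorem hasDerivAt_heatKernel (ht : 0 < t) :
    HasDerivAt (heatKernel n r) (heatKernel n r t * (r ^ 2 / (4 * t ^ 2) - n / (2 * t))) t := by
  have h4πt : 0 < 4 * π * t := by positivity
  have hexp : HasDerivAt (fun s => exp (-r ^ 2 / (4 * s)))
      (exp (-r ^ 2 / (4 * t)) * (r ^ 2 / (4 * t ^ 2))) t := by
    have := ((hasDerivAt_inv ht.ne').const_mul (-r ^ 2 / 4)).exp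
    convert this using 1
    · ext s; congr 1; field_simp
    · field_simp
  have hpow : HasDerivAt (fun s : ℝ => (4 * π * s) ^ ((n : ℝ) / 2))
      (4 * π * ((n : ℝ) / 2) * (4 * π * t) ^ ((n : ℝ) / 2 - 1)) t := by
    simpa using ((hasDerivAt_id t).const_mul (4 * π)).rpow_const (p := (n : ℝ) / 2)
      (Or.inl (by simpa using h4πt.ne'))
  refine (hexp.div hpow (rpow_pos_of_pos h4πt _).ne').congr_deriv ?_
  rw [heatKernel, rpow_sub_one h4πt.ne']
  field_simp

theorem heatKernel_pos (ht : 0 < t) : 0 < heatKernel n r t := by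
  unfold heatKernel; positivity

theorem abs_deriv_heatKernel_le (ht : 0 < t) :
    |deriv (heatKernel n r) t| ≤ heatKernel n r t * (r ^ 2 / (4 * t ^ 2) + n / (2 * t)) := by
  rw [(hasDerivAt_heatKernel ht).deriv, abs_mul, abs_of_pos (heatKernel_pos ht)]
  refine mul_le_mul_of_nonneg_left ?_ (heatKernel_pos ht).le
  have hrt : 0 ≤ r ^ 2 / (4 * t ^ 2) := by positivity
  have hnt : 0 ≤ (n : ℝ) / (2 * t) := by positivity
  rw [abs_sub_le_iff]
  constructor <;> linarith

theorem heatKernel_mul_add_eq (ht : 0 < t) :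
    heatKernel n r t * (r ^ 2 / (4 * t ^ 2) + n / (2 * t)) =
      (4 * π) ^ (-((n : ℝ) / 2)) *
        (r ^ 2 / 4 * (exp (-(r ^ 2 / 4) / t) * t ^ (-(((n : ℝ) / 2 + 1) + 1))) +
          n / 2 * (exp (-(r ^ 2 / 4) / t) * t ^ (-((n : ℝ) / 2 + 1)))) := by
  rw [heatKernel_eq_of_pos ht, neg_add, neg_add, rpow_add ht, rpow_add ht, rpow_neg_one]
  field_simp

theorem integrableOn_heatKernel_mul_add (hn : 0 < n) (hr : 0 < r) :
    IntegrableOn (fun t => heatKernel n r t * (r ^ 2 / (4 * t ^ 2) + n / (2 * t))) (Ioi 0) := by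
  have ha : 0 < r ^ 2 / 4 := by positivity
  have hq : (0 : ℝ) < n / 2 := div_pos (Nat.cast_pos.2 hn) two_pos
  refine IntegrableOn.congr_fun ?_ (fun t ht => (heatKernel_mul_add_eq ht).symm) measurableSet_Ioi
  exact (((integrableOn_exp_neg_div_mul_rpow ha (by positivity)).const_mul _).add
    ((integrableOn_exp_neg_div_mul_rpow ha hq).const_mul _)).const_mul _

theorem integral_heatKernel_mul_add (hn : 0 < n) (hr : 0 < r) :
    ∫ t in Ioi 0, heatKernel n r t * (r ^ 2 / (4 * t ^ 2) + n / (2 * t)) =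
      2 * Gamma ((n : ℝ) / 2 + 1) / π ^ ((n : ℝ) / 2) / r ^ n := by
  have ha : 0 < r ^ 2 / 4 := by positivity
  have hq : (0 : ℝ) < n / 2 := div_pos (Nat.cast_pos.2 hn) two_pos
  rw [setIntegral_congr_fun measurableSet_Ioi (fun t ht => heatKernel_mul_add_eq ht),
    integral_const_mul,
    integral_add ((integrableOn_exp_neg_div_mul_rpow ha (by positivity)).const_mul _)
      ((integrableOn_exp_neg_div_mul_rpow ha hq).const_mul _),
    integral_const_mul, integral_const_mul,
    integral_exp_neg_div_mul_rpow ha (by positivity), integral_exp_neg_div_mul_rpow ha hq,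
    neg_add, rpow_add ha, rpow_neg_one]
  set c := (4 * π) ^ (-((n : ℝ) / 2))
  set A := (r ^ 2 / 4) ^ (-((n : ℝ) / 2))
  have hcA : c * A = 1 / π ^ ((n : ℝ) / 2) / r ^ n := by
    rw [← mul_rpow (by positivity) ha.le, show 4 * π * (r ^ 2 / 4) = π * r ^ 2 by ring,
      rpow_neg (by positivity), mul_rpow (by positivity) (by positivity), ← rpow_natCast r 2,
      ← rpow_mul hr.le, show ((2 : ℕ) : ℝ) * (n / 2) = n by push_cast; ring, rpow_natCast]
    field_simp
  linear_combination (c * Gamma ((n : ℝ) / 2 + 1) * A) * mul_inv_cancel₀ ha.ne' -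
    (c * A) * Gamma_add_one hq.ne' + (2 * Gamma ((n : ℝ) / 2 + 1)) * hcA

theorem integrableOn_deriv_heatKernel (hn : 0 < n) (hr : 0 < r) :
    IntegrableOn (deriv (heatKernel n r)) (Ioi 0) :=
  (integrableOn_heatKernel_mul_add hn hr).mono' (stronglyMeasurable_deriv _).aestronglyMeasurable <|
    (ae_restrict_iff' measurableSet_Ioi).2 <| ae_of_all _ fun _ ht => abs_deriv_heatKernel_le ht

theorem integral_abs_deriv_heatKernel_le (hn : 0 < n) (hr : 0 < r) :
    ∫ t in Ioi 0, |deriv (heatKernel n r) t| ≤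
      2 * Gamma ((n : ℝ) / 2 + 1) / π ^ ((n : ℝ) / 2) / r ^ n :=
  integral_heatKernel_mul_add hn hr ▸
    setIntegral_mono_on (integrableOn_deriv_heatKernel hn hr).abs
      (integrableOn_heatKernel_mul_add hn hr) measurableSet_Ioi
      fun _ ht => abs_deriv_heatKernel_le ht

end HeatKernel

theorem laplace_type_euclidean_kernel_bound (n : ℕ) (hn : 1 ≤ n) (φ : ℝ → ℝ)
    (hφ : MemLp φ ⊤ (volume.restrict (Ioi (0 : ℝ)))) :
    ∃ C > (0 : ℝ), ∀ x y : EuclideanSpace ℝ (Fin n), x ≠ y →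
      IntegrableOn
        (fun t => φ t * deriv (fun s : ℝ =>
          Real.exp (-‖x - y‖ ^ 2 / (4 * s)) / (4 * π * s) ^ ((n : ℝ) / 2)) t)
        (Ioi 0) ∧
      |∫ t in Ioi (0 : ℝ), φ t * deriv (fun s : ℝ =>
          Real.exp (-‖x - y‖ ^ 2 / (4 * s)) / (4 * π * s) ^ ((n : ℝ) / 2)) t| ≤
        C / ‖x - y‖ ^ n := by
  set M := lpNorm φ ⊤ (volume.restrict (Ioi (0 : ℝ)))
  set K := 2 * Gamma ((n : ℝ) / 2 + 1) / π ^ ((n : ℝ) / 2)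
  have hM : 0 ≤ M := lpNorm_nonneg
  have hK : 0 < K := by positivity
  refine ⟨(M + 1) * K, mul_pos (by linarith) hK, fun x y hxy => ?_⟩
  have hr : 0 < ‖x - y‖ := norm_pos_iff.2 (sub_ne_zero.2 hxy)
  have hD := integrableOn_deriv_heatKernel hn hr
  refine ⟨hD.mul_of_top_right hφ, ?_⟩
  calc |∫ t in Ioi 0, φ t * deriv (heatKernel n ‖x - y‖) t|
      ≤ M * ∫ t in Ioi 0, |deriv (heatKernel n ‖x - y‖) t| :=
        norm_integral_mul_le_lpNorm_top_mul hφ hD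
    _ ≤ M * (K / ‖x - y‖ ^ n) :=
        mul_le_mul_of_nonneg_left (integral_abs_deriv_heatKernel_le hn hr) hM
    _ ≤ (M + 1) * K / ‖x - y‖ ^ n := by rw [mul_div_assoc]; gcongr; linarith
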